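/- arXiv:1510.05925 — 4 statements merged into one kernel-verified Lean document; each statement's English description precedes it below -/
import Mathlib

section
/- Distance bound from the Reg(t) set to the complementarity set: equip ℝ^q × ℝ^q with the Euclidean norm. If t ≥ 0 and (x1, x2) ∈ R(t), then the distance from (x1, x2) to the complementarity set C (the infimum of Euclidean distances to points of C) is at most √(q·t). In particular, feasible points of the regularized problem Reg(t) lie within O(√t) of the MPCC feasible complementarity set as t → 0. -/
/-! Zeroing, in each pair `(x1_j, x2_j)`, the smaller of the two coordinates gives a point of
the complementarity set at squared distance `∑ j, min (x1_j, x2_j)²`, and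
`min (a, b)² ≤ a b ≤ t` on `R(t)`. -/

open Metric

theorem sq_min_le_mul {a b : ℝ} (ha : 0 ≤ a) (hb : 0 ≤ b) : min a b ^ 2 ≤ a * b := by
  rw [sq]
  rcases le_total a b with hab | hba
  · rw [min_eq_left hab]
    exact mul_le_mul_of_nonneg_left hab ha
  · rw [min_eq_right hba]
    exact mul_le_mul_of_nonneg_right hba hb

variable {ι : Type*}

def complementaritySet (ι : Type*) : Set (EuclideanSpace ℝ (ι ⊕ ι)) :=
  {y | ∀ j, 0 ≤ y (Sum.inl j) ∧ 0 ≤ y (Sum.inr j) ∧ y (Sum.inl j) * y (Sum.inr j) = 0}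

noncomputable def complementarityProj (x : EuclideanSpace ℝ (ι ⊕ ι)) : EuclideanSpace ℝ (ι ⊕ ι) :=
  WithLp.toLp 2 <| Sum.elim
    (fun j => if x (Sum.inl j) ≤ x (Sum.inr j) then 0 else x (Sum.inl j))
    (fun j => if x (Sum.inl j) ≤ x (Sum.inr j) then x (Sum.inr j) else 0)

theorem complementarityProj_mem {x : EuclideanSpace ℝ (ι ⊕ ι)} (h1 : ∀ j, 0 ≤ x (Sum.inl j))
    (h2 : ∀ j, 0 ≤ x (Sum.inr j)) : complementarityProj x ∈ complementaritySet ι := by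
  intro j
  by_cases h : x (Sum.inl j) ≤ x (Sum.inr j) <;> simp [complementarityProj, h, h1 j, h2 j]

theorem dist_complementarityProj_sq [Fintype ι] (x : EuclideanSpace ℝ (ι ⊕ ι)) :
    dist x (complementarityProj x) ^ 2 = ∑ j, min (x (Sum.inl j)) (x (Sum.inr j)) ^ 2 := by
  rw [EuclideanSpace.dist_eq, Real.sq_sqrt (by positivity), Fintype.sum_sum_type,
    ← Finset.sum_add_distrib]
  refine Finset.sum_congr rfl fun j _ => ?_
  by_cases h : x (Sum.inl j) ≤ x (Sum.inr j)
  · simp [complementarityProj, h]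
  · simp [complementarityProj, h, min_eq_right (le_of_not_ge h)]

theorem infDist_complementaritySet_le [Fintype ι] {t : ℝ} {x : EuclideanSpace ℝ (ι ⊕ ι)}
    (h1 : ∀ j, 0 ≤ x (Sum.inl j)) (h2 : ∀ j, 0 ≤ x (Sum.inr j)) (hprod : ∀ j, x (Sum.inl j) * x (Sum.inr j) ≤ t) :
    infDist x (complementaritySet ι) ≤ Real.sqrt (Fintype.card ι * t) := by
  refine (infDist_le_dist_of_mem (complementarityProj_mem h1 h2)).trans ?_
  rw [← Real.sqrt_sq dist_nonneg, dist_complementarityProj_sq]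
  refine Real.sqrt_le_sqrt ?_
  calc ∑ j, min (x (Sum.inl j)) (x (Sum.inr j)) ^ 2
      ≤ ∑ _j : ι, t := Finset.sum_le_sum fun j _ => (sq_min_le_mul (h1 j) (h2 j)).trans (hprod j)
    _ = Fintype.card ι * t := by simp

theorem stmt_9_general (q : ℕ) (t : ℝ)
    (x : EuclideanSpace ℝ (Fin q ⊕ Fin q))
    (h1 : ∀ j, 0 ≤ x (Sum.inl j)) (h2 : ∀ j, 0 ≤ x (Sum.inr j))
    (hprod : ∀ j, x (Sum.inl j) * x (Sum.inr j) ≤ t) :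
    Metric.infDist x
      {y : EuclideanSpace ℝ (Fin q ⊕ Fin q) |
        ∀ j, 0 ≤ y (Sum.inl j) ∧ 0 ≤ y (Sum.inr j) ∧
          y (Sum.inl j) * y (Sum.inr j) = 0}
      ≤ Real.sqrt ((q : ℝ) * t) := by
  have h := infDist_complementaritySet_le h1 h2 hprod
  rw [Fintype.card_fin] at h
  exact h

/-- Distance bound from the Reg(t) set to the complementarity set, in the Euclidean
norm on ℝ^q × ℝ^q ≅ ℝ^{2q}: points of R(t) are within √(q·t) of C. -/
theorem stmt_9 (q : ℕ) (hq : 0 < q) (t : ℝ) (ht : 0 ≤ t)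
    (x : EuclideanSpace ℝ (Fin q ⊕ Fin q))
    (h1 : ∀ j, 0 ≤ x (Sum.inl j)) (h2 : ∀ j, 0 ≤ x (Sum.inr j))
    (hprod : ∀ j, x (Sum.inl j) * x (Sum.inr j) ≤ t) :
    Metric.infDist x
      {y : EuclideanSpace ℝ (Fin q ⊕ Fin q) |
        ∀ j, 0 ≤ y (Sum.inl j) ∧ 0 ≤ y (Sum.inr j) ∧
          y (Sum.inl j) * y (Sum.inr j) = 0}
      ≤ Real.sqrt ((q : ℝ) * t) :=
  stmt_9_general q t x h1 h2 hprod
end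

section
/- A local solution of the relaxed NLP that satisfies complementarity is a local solution of the MPCC: let S ⊆ ℝ^n × ℝ^q × ℝ^q (the set defined by the remaining constraints c_E(x) = 0, c_I(x) ≥ 0), let F = {(x0, x1, x2) ∈ S : for every j, x1_j ≥ 0, x2_j ≥ 0 and x1_j · x2_j = 0} be the MPCC feasible set, and let x* = (x0*, x1*, x2*) ∈ F. Define the relaxed feasible set Rel(x*) = {(x0, x1, x2) ∈ S : x1_j = 0 for every j with x2*_j > 0, x2_j = 0 for every j with x1*_j > 0, x1_j ≥ 0 for every j with x2*_j = 0, and x2_j ≥ 0 for every j with x1*_j = 0}. If f : ℝ^n × ℝ^q × ℝ^q → ℝ and x* is a local minimizer of f on Rel(x*), then x* is a local minimizer of f on F. -/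
open Topology Filter


/-- A local solution of the relaxed NLP that satisfies complementarity is a local
solution of the MPCC. -/
theorem stmt_13 (n q : ℕ)
    (S : Set ((Fin n → ℝ) × (Fin q → ℝ) × (Fin q → ℝ)))
    (f : (Fin n → ℝ) × (Fin q → ℝ) × (Fin q → ℝ) → ℝ)
    (xs : (Fin n → ℝ) × (Fin q → ℝ) × (Fin q → ℝ))
    (hxsF : xs ∈ {x ∈ S | ∀ j, 0 ≤ x.2.1 j ∧ 0 ≤ x.2.2 j ∧ x.2.1 j * x.2.2 j = 0})
    (hlocal : IsLocalMinOn f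
      {x ∈ S |
        (∀ j, 0 < xs.2.2 j → x.2.1 j = 0) ∧
        (∀ j, 0 < xs.2.1 j → x.2.2 j = 0) ∧
        (∀ j, xs.2.2 j = 0 → 0 ≤ x.2.1 j) ∧
        (∀ j, xs.2.1 j = 0 → 0 ≤ x.2.2 j)} xs) :
    IsLocalMinOn f
      {x ∈ S | ∀ j, 0 ≤ x.2.1 j ∧ 0 ≤ x.2.2 j ∧ x.2.1 j * x.2.2 j = 0} xs := by
  rw [IsLocalMinOn, IsMinFilter, eventually_nhdsWithin_iff] at hlocal ⊢
  have hpos : ∀ᶠ x in 𝓝 xs, ∀ j : Fin q,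
      (0 < xs.2.1 j → 0 < x.2.1 j) ∧ (0 < xs.2.2 j → 0 < x.2.2 j) := by
    rw [eventually_all]
    intro j
    have h1 : Continuous fun x : (Fin n → ℝ) × (Fin q → ℝ) × (Fin q → ℝ) => x.2.1 j :=
      (continuous_apply j).comp (continuous_fst.comp continuous_snd)
    have h2 : Continuous fun x : (Fin n → ℝ) × (Fin q → ℝ) × (Fin q → ℝ) => x.2.2 j :=
      (continuous_apply j).comp (continuous_snd.comp continuous_snd)
    by_cases hc1 : 0 < xs.2.1 j
    · by_cases hc2 : 0 < xs.2.2 j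
      · filter_upwards [(h1.tendsto xs).eventually (eventually_gt_nhds hc1),
          (h2.tendsto xs).eventually (eventually_gt_nhds hc2)] with x hx1 hx2
        exact ⟨fun _ => hx1, fun _ => hx2⟩
      · filter_upwards [(h1.tendsto xs).eventually (eventually_gt_nhds hc1)] with x hx1
        exact ⟨fun _ => hx1, fun h => absurd h hc2⟩
    · by_cases hc2 : 0 < xs.2.2 j
      · filter_upwards [(h2.tendsto xs).eventually (eventually_gt_nhds hc2)] with x hx2
        exact ⟨fun h => absurd h hc1, fun _ => hx2⟩
      · exact Filter.Eventually.of_forall fun x =>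
          ⟨fun h => absurd h hc1, fun h => absurd h hc2⟩
  filter_upwards [hlocal, hpos] with x hx hxp hxF
  apply hx
  refine ⟨hxF.1, ?_, ?_, ?_, ?_⟩
  · intro j hj
    have h2 := (hxp j).2 hj
    have := (hxF.2 j).2.2
    rcases mul_eq_zero.mp this with h | h
    · exact h
    · exact absurd h (ne_of_gt h2)
  · intro j hj
    have h1 := (hxp j).1 hj
    have := (hxF.2 j).2.2
    rcases mul_eq_zero.mp this with h | h
    · exact absurd h (ne_of_gt h1)
    · exact h
  · intro j _; exact (hxF.2 j).1
  · intro j _; exact (hxF.2 j).2.1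
end

section
/- The Mangasarian–Fromovitz constraint qualification fails at every feasible point of the NLP reformulation of the MPCC: let q ≥ 1 and let (x1, x2) ∈ C, i.e., x1_j ≥ 0, x2_j ≥ 0 and x1_j · x2_j = 0 for every j. Then there is no direction (d1, d2) ∈ ℝ^q × ℝ^q such that simultaneously: d1_j > 0 for every j with x1_j = 0, d2_j > 0 for every j with x2_j = 0, and x2_j · d1_j + x1_j · d2_j < 0 for every j. (The last condition says the direction strictly decreases each constraint function x1_j x2_j ≤ 0, which is active at every feasible point; hence no strictly feasible direction for the active constraints exists.) -/
/-- The MFCQ fails at every feasible point of the NLP reformulation of the MPCC: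
no direction is strictly feasible for all active constraints. -/
theorem stmt_15 (q : ℕ) (hq : 0 < q)
    (x1 x2 : Fin q → ℝ)
    (h1 : ∀ j, 0 ≤ x1 j) (h2 : ∀ j, 0 ≤ x2 j)
    (hcomp : ∀ j, x1 j * x2 j = 0) :
    ¬ ∃ d1 d2 : Fin q → ℝ,
        (∀ j, x1 j = 0 → 0 < d1 j) ∧
        (∀ j, x2 j = 0 → 0 < d2 j) ∧
        (∀ j, x2 j * d1 j + x1 j * d2 j < 0) := by
  rintro ⟨d1, d2, hd1, hd2, hd⟩
  set j : Fin q := ⟨0, hq⟩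
  have := hd j
  rcases mul_eq_zero.1 (hcomp j) with h | h
  · have hx1 : x1 j = 0 := h
    have h0 : x1 j * d2 j = 0 := by rw [hx1]; ring
    have : 0 ≤ x2 j * d1 j := mul_nonneg (h2 j) (le_of_lt (hd1 j hx1))
    linarith [hd j]
  · have hx2 : x2 j = 0 := h
    have h0 : x2 j * d1 j = 0 := by rw [hx2]; ring
    have : 0 ≤ x1 j * d2 j := mul_nonneg (h1 j) (le_of_lt (hd2 j hx2))
    linarith [hd j]
end

section
/- Strong stationarity is equivalent to the KKT conditions of the NLP reformulation: let f : ℝ^n × ℝ^q × ℝ^q → ℝ and c_i : ℝ^n × ℝ^q × ℝ^q → ℝ for i in finite disjoint index sets E and I, all differentiable at a point x* = (x0*, x1*, x2*) that is feasible for the MPCC (c_i(x*) = 0 for i ∈ E, c_i(x*) ≥ 0 for i ∈ I, and x1*_j ≥ 0, x2*_j ≥ 0, x1*_j · x2*_j = 0 for every j). Denote by π¹_j and π²_j the coordinate projections of ℝ^n × ℝ^q × ℝ^q onto the coordinates x1_j and x2_j, respectively, and by Df(x*), Dc_i(x*) the Fréchet derivatives. Then the following are equivalent. (i) x* is strongly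 stationary: there exist λ ∈ ℝ^{E ∪ I} and ν̂1, ν̂2 ∈ ℝ^q with Df(x*) = ∑_{i ∈ E ∪ I} λ_i Dc_i(x*) + ∑_j ν̂1_j π¹_j + ∑_j ν̂2_j π²_j, λ_i ≥ 0 and λ_i c_i(x*) = 0 for every i ∈ I, ν̂1_j · x1*_j = 0 and ν̂2_j · x2*_j = 0 for every j, and ν̂1_j ≥ 0 and ν̂2_j ≥ 0 for every j with x1*_j = x2*_j = 0. (ii) x* satisfies the KKT conditions of the NLP reformulation in which the complementarity constraints are replaced by x1 ≥ 0, x2 ≥ 0 and x1_j x2_j ≤ 0: there exist λ ∈ ℝ^{E ∪ I}, ν1, ν2 ∈ ℝ^q with ν1_j ≥ 0, ν2_j ≥ 0, and ξ ∈ ℝ^q with ξ_j ≥ 0, such that Df(x*) = ∑_{i ∈ E ∪ I} λ_i Dc_i(x*) + ∑_j ν1_j π¹_j + ∑_j ν2_j π²_j − ∑_j ξ_j (x2*_j π¹_j + x1*_j π²_j), λ_i ≥ 0 and λ_i c_i(x*) = 0 for every i ∈ I, and ν1_j · x1*_j = 0 and ν2_j · x2*_j = 0 for every j. -/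
/-- Strong stationarity of the MPCC is equivalent to the KKT conditions of its NLP
reformulation (complementarity replaced by x1 ≥ 0, x2 ≥ 0, x1_j x2_j ≤ 0). -/
theorem stmt_16 (n q : ℕ) (ιE ιI : Type) [Fintype ιE] [Fintype ιI]
    (f : (Fin n → ℝ) × (Fin q → ℝ) × (Fin q → ℝ) → ℝ)
    (cE : ιE → (Fin n → ℝ) × (Fin q → ℝ) × (Fin q → ℝ) → ℝ)
    (cI : ιI → (Fin n → ℝ) × (Fin q → ℝ) × (Fin q → ℝ) → ℝ)
    (xs : (Fin n → ℝ) × (Fin q → ℝ) × (Fin q → ℝ))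
    (Df : ((Fin n → ℝ) × (Fin q → ℝ) × (Fin q → ℝ)) →L[ℝ] ℝ)
    (DcE : ιE → ((Fin n → ℝ) × (Fin q → ℝ) × (Fin q → ℝ)) →L[ℝ] ℝ)
    (DcI : ιI → ((Fin n → ℝ) × (Fin q → ℝ) × (Fin q → ℝ)) →L[ℝ] ℝ)
    (hf : HasFDerivAt f Df xs)
    (hcE : ∀ i, HasFDerivAt (cE i) (DcE i) xs)
    (hcI : ∀ i, HasFDerivAt (cI i) (DcI i) xs)
    (hfeasE : ∀ i, cE i xs = 0) (hfeasI : ∀ i, 0 ≤ cI i xs)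
    (hx1 : ∀ j, 0 ≤ xs.2.1 j) (hx2 : ∀ j, 0 ≤ xs.2.2 j)
    (hcomp : ∀ j, xs.2.1 j * xs.2.2 j = 0) :
    -- (i) strong stationarity
    (∃ (lE : ιE → ℝ) (lI : ιI → ℝ) (ν1 ν2 : Fin q → ℝ),
      (∀ v, Df v = ∑ i, lE i * DcE i v + ∑ i, lI i * DcI i v
          + ∑ j, ν1 j * v.2.1 j + ∑ j, ν2 j * v.2.2 j) ∧
      (∀ i, 0 ≤ lI i) ∧ (∀ i, lI i * cI i xs = 0) ∧
      (∀ j, ν1 j * xs.2.1 j = 0) ∧ (∀ j, ν2 j * xs.2.2 j = 0) ∧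
      (∀ j, xs.2.1 j = 0 → xs.2.2 j = 0 → 0 ≤ ν1 j ∧ 0 ≤ ν2 j))
    ↔
    -- (ii) KKT conditions of the NLP reformulation
    (∃ (lE : ιE → ℝ) (lI : ιI → ℝ) (ν1 ν2 ξ : Fin q → ℝ),
      (∀ j, 0 ≤ ν1 j) ∧ (∀ j, 0 ≤ ν2 j) ∧ (∀ j, 0 ≤ ξ j) ∧
      (∀ v, Df v = ∑ i, lE i * DcE i v + ∑ i, lI i * DcI i v
          + ∑ j, ν1 j * v.2.1 j + ∑ j, ν2 j * v.2.2 j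
          - ∑ j, ξ j * (xs.2.2 j * v.2.1 j + xs.2.1 j * v.2.2 j)) ∧
      (∀ i, 0 ≤ lI i) ∧ (∀ i, lI i * cI i xs = 0) ∧
      (∀ j, ν1 j * xs.2.1 j = 0) ∧ (∀ j, ν2 j * xs.2.2 j = 0)) := by
  constructor
  · rintro ⟨lE, lI, w1, w2, hDf, hlI, hlIc, hw1, hw2, hbi⟩
    set N1 : Fin q → ℝ := fun j =>
      if 0 < xs.2.1 j then 0 else if 0 < xs.2.2 j then max 0 (w1 j) else w1 j with hN1
    set N2 : Fin q → ℝ := fun j =>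
      if 0 < xs.2.2 j then 0 else if 0 < xs.2.1 j then max 0 (w2 j) else w2 j with hN2
    set Ξ : Fin q → ℝ := fun j =>
      if 0 < xs.2.1 j then max 0 (-(w2 j)) / xs.2.1 j
      else if 0 < xs.2.2 j then max 0 (-(w1 j)) / xs.2.2 j else 0 with hΞ
    have key : ∀ j, (N1 j - Ξ j * xs.2.2 j = w1 j) ∧ (N2 j - Ξ j * xs.2.1 j = w2 j) ∧
        0 ≤ N1 j ∧ 0 ≤ N2 j ∧ 0 ≤ Ξ j ∧ N1 j * xs.2.1 j = 0 ∧ N2 j * xs.2.2 j = 0 := by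
      intro j
      have hmax : ∀ a : ℝ, max 0 a - max 0 (-a) = a := by
        intro a
        rcases le_total 0 a with h | h
        · rw [max_eq_right h, max_eq_left (by linarith)]; ring
        · rw [max_eq_left h, max_eq_right (by linarith)]; ring
      rcases lt_or_eq_of_le (hx1 j) with h1 | h1
      · -- xs.2.1 j > 0
        have hx2z : xs.2.2 j = 0 := by
          have := hcomp j; nlinarith
        have hw1z : w1 j = 0 := by
          have := hw1 j
          exact (mul_eq_zero.mp this).resolve_right (ne_of_gt h1)
        simp only [hN1, hN2, hΞ, if_pos h1, hx2z, lt_self_iff_false, if_false]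
        refine ⟨by rw [hw1z]; ring, ?_, le_rfl, le_max_left _ _,
          div_nonneg (le_max_left _ _) (le_of_lt h1), by ring, by ring⟩
        rw [div_mul_cancel₀ _ (ne_of_gt h1)]
        have := hmax (w2 j); linarith [this]
      · -- xs.2.1 j = 0
        have h1' : xs.2.1 j = 0 := h1.symm
        have hnlt1 : ¬ 0 < xs.2.1 j := by rw [h1']; exact lt_irrefl 0
        rcases lt_or_eq_of_le (hx2 j) with h2 | h2
        · have hw2z : w2 j = 0 := by
            have := hw2 j
            exact (mul_eq_zero.mp this).resolve_right (ne_of_gt h2)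
          simp only [hN1, hN2, hΞ, if_neg hnlt1, if_pos h2, h1', lt_self_iff_false, if_false]
          refine ⟨?_, by rw [hw2z]; ring, le_max_left _ _, le_rfl,
            div_nonneg (le_max_left _ _) (le_of_lt h2), by ring, by ring⟩
          rw [div_mul_cancel₀ _ (ne_of_gt h2)]
          have := hmax (w1 j); linarith [this]
        · have h2' : xs.2.2 j = 0 := h2.symm
          have hnlt2 : ¬ 0 < xs.2.2 j := by rw [h2']; exact lt_irrefl 0
          obtain ⟨hb1, hb2⟩ := hbi j h1' h2'
          simp only [hN1, hN2, hΞ, if_neg hnlt1, if_neg hnlt2, h1', h2', lt_self_iff_false, if_false]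
          exact ⟨by ring, by ring, hb1, hb2, le_rfl, by ring, by ring⟩
    refine ⟨lE, lI, N1, N2, Ξ, fun j => (key j).2.2.1, fun j => (key j).2.2.2.1,
      fun j => (key j).2.2.2.2.1, ?_, hlI, hlIc,
      fun j => (key j).2.2.2.2.2.1, fun j => (key j).2.2.2.2.2.2⟩
    intro v
    have hsum : ∑ j, w1 j * v.2.1 j + ∑ j, w2 j * v.2.2 j
        = ∑ j, N1 j * v.2.1 j + ∑ j, N2 j * v.2.2 j
          - ∑ j, Ξ j * (xs.2.2 j * v.2.1 j + xs.2.1 j * v.2.2 j) := by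
      rw [← Finset.sum_add_distrib, ← Finset.sum_add_distrib, ← Finset.sum_sub_distrib]
      refine Finset.sum_congr rfl (fun j _ => ?_)
      have h1 := (key j).1
      have h2 := (key j).2.1
      linear_combination (-(v.2.1 j)) * h1 - (v.2.2 j) * h2
    have := hDf v
    linarith [this, hsum]
  · rintro ⟨lE, lI, N1, N2, Ξ, hN1, hN2, hΞ, hDf, hlI, hlIc, hN1c, hN2c⟩
    refine ⟨lE, lI, fun j => N1 j - Ξ j * xs.2.2 j, fun j => N2 j - Ξ j * xs.2.1 j,
      ?_, hlI, hlIc, ?_, ?_, ?_⟩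
    · intro v
      have hsum : ∑ j, (N1 j - Ξ j * xs.2.2 j) * v.2.1 j
            + ∑ j, (N2 j - Ξ j * xs.2.1 j) * v.2.2 j
          = ∑ j, N1 j * v.2.1 j + ∑ j, N2 j * v.2.2 j
            - ∑ j, Ξ j * (xs.2.2 j * v.2.1 j + xs.2.1 j * v.2.2 j) := by
        rw [← Finset.sum_add_distrib, ← Finset.sum_add_distrib, ← Finset.sum_sub_distrib]
        exact Finset.sum_congr rfl (fun j _ => by ring)
      have := hDf v
      linarith [this, hsum]
    · intro j
      show (N1 j - Ξ j * xs.2.2 j) * xs.2.1 j = 0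
      linear_combination hN1c j - Ξ j * hcomp j
    · intro j
      show (N2 j - Ξ j * xs.2.1 j) * xs.2.2 j = 0
      linear_combination hN2c j - Ξ j * hcomp j
    · intro j h1 h2
      constructor
      · show 0 ≤ N1 j - Ξ j * xs.2.2 j
        rw [h2]; simpa using hN1 j
      · show 0 ≤ N2 j - Ξ j * xs.2.1 j
        rw [h1]; simpa using hN2 j
end
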